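/- Let g : F(u,v) → Z ⋊ Z be the homomorphism with g(u) = (1,0) and g(v) = (0,1). Then the kernel of g is a free group with basis the set {Γ_{k,l} = v^k u^l v u^l v^{-k-1} : k, l ∈ Z, l ≠ 0}. -/

import Mathlib

/-- The underlying set of the nontrivial semidirect product `ℤ ⋊ ℤ`
(the fundamental group of the Klein bottle). -/
@[ext]
structure KB where
  a : ℤ
  b : ℤ

namespace KB

instance : Mul KB := ⟨fun x y => ⟨x.a + ((-1 : ℤˣ) ^ x.b : ℤˣ) * y.a, x.b + y.b⟩⟩
instance : One KB := ⟨⟨0, 0⟩⟩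
instance : Inv KB := ⟨fun x => ⟨-(((-1 : ℤˣ) ^ x.b : ℤˣ) * x.a), -x.b⟩⟩

lemma mul_def (x y : KB) :
    x * y = ⟨x.a + ((-1 : ℤˣ) ^ x.b : ℤˣ) * y.a, x.b + y.b⟩ := rfl

lemma one_def : (1 : KB) = ⟨0, 0⟩ := rfl

lemma inv_def (x : KB) :
    x⁻¹ = ⟨-(((-1 : ℤˣ) ^ x.b : ℤˣ) * x.a), -x.b⟩ := rfl

instance : Group KB :=
  Group.ofLeftAxioms
    (by
      rintro ⟨a, b⟩ ⟨c, d⟩ ⟨e, f⟩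
      ext <;> simp [mul_def, zpow_add] <;> ring)
    (by rintro ⟨a, b⟩; ext <;> simp [mul_def, one_def])
    (by
      rintro ⟨a, b⟩
      ext <;> simp [mul_def, one_def, inv_def, zpow_neg])

end KB
namespace KleinBU

/-- Generator `u` of the free group `F(u,v)`. -/
def u : FreeGroup Bool := FreeGroup.of true

/-- Generator `v` of the free group `F(u,v)`. -/
def v : FreeGroup Bool := FreeGroup.of false

/-- The homomorphism `g : F(u,v) → ℤ ⋊ ℤ` with `g u = (1,0)` and `g v = (0,1)`. -/
def g : FreeGroup Bool →* KB :=
  FreeGroup.lift (fun x => if x then ⟨1, 0⟩ else ⟨0, 1⟩)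

/-- The element `B = u v u v⁻¹`. -/
def Bel : FreeGroup Bool := u * v * u * v⁻¹

/-- The element `B_{k,l} = v^k u^l B u^{-l} v^{-k}`. -/
def Bkl (k l : ℤ) : FreeGroup Bool := v ^ k * u ^ l * Bel * u ^ (-l) * v ^ (-k)

end KleinBU

/-!
Reidemeister–Schreier rewriting. The cosets of `ker g` are the elements `x = (a, b)` of `ℤ ⋊ ℤ`,
with representatives `t x = (u ^ a * v ^ b)⁻¹`. Reading a word letter by letter while tracking the
current coset, and recording at each letter `v` read at a coset with `a ≠ 0` the Schreier generator
`t x * v * (t x')⁻¹ = Γ_{-b,-a}`, is a homomorphism into the regular wreath product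
`FreeGroup ι ≀ᵣ (ℤ ⋊ ℤ)`. Substituting the `Γ`'s back telescopes to `t 1 * w * (t 1)⁻¹ = w` on
`ker g`, so rewriting is a left inverse of `Γ`. It is also a right inverse, because reading
`Γ_{k,l}` records exactly `(k, l)`: the `u`-steps record nothing and both powers of `v` are read at
cosets with `a = 0`.
-/

namespace RegularWreathProduct

variable {D Q : Type*} [Group D] [Group Q]

def leftTrivialOn (H : Subgroup Q) : Subgroup (D ≀ᵣ Q) where
  carrier := {p | p.right ∈ H ∧ ∀ x ∈ H, p.left x = 1}
  one_mem' := ⟨H.one_mem, fun _ _ => rfl⟩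
  mul_mem' := by
    rintro p q ⟨hp, hp'⟩ ⟨hq, hq'⟩
    refine ⟨H.mul_mem hp hq, fun x hx => ?_⟩
    simp [hp' x hx, hq' _ (H.mul_mem (H.inv_mem hp) hx)]
  inv_mem' := by
    rintro p ⟨hp, hp'⟩
    exact ⟨H.inv_mem hp, fun x hx => by simp [hp' _ (H.mul_mem hp hx)]⟩

end RegularWreathProduct

namespace FreeGroup

open RegularWreathProduct

section SchreierRewrite

variable {α D Q : Type*} [Group D] [Group Q] (g : FreeGroup α →* Q) (f : α → Q → D)

/-- `(schreierRewrite g f w).left x` is the product of the labels `f a y` of the letters `a` of `w`,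
read from the coset `x`; a letter `a` moves the coset `y` to `(g (of a))⁻¹ * y`. -/
def schreierRewrite : FreeGroup α →* D ≀ᵣ Q :=
  lift fun a => ⟨f a, g (of a)⟩

@[simp]
lemma schreierRewrite_right (w : FreeGroup α) : (schreierRewrite g f w).right = g w := by
  have : rightHom.comp (schreierRewrite g f) = g := ext_hom _ _ fun a => by simp [schreierRewrite]
  exact DFunLike.congr_fun this w

lemma schreierRewrite_mul_left (w₁ w₂ : FreeGroup α) (x : Q) :
    (schreierRewrite g f (w₁ * w₂)).left x =
      (schreierRewrite g f w₁).left x * (schreierRewrite g f w₂).left ((g w₁)⁻¹ * x) := by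
  simp

lemma schreierRewrite_inv_left (w : FreeGroup α) (x : Q) :
    (schreierRewrite g f w⁻¹).left x = ((schreierRewrite g f w).left (g w * x))⁻¹ := by
  simp

lemma schreierRewrite_zpow_left_eq_one {a : α} {H : Subgroup Q} (ha : g (of a) ∈ H)
    (hf : ∀ x ∈ H, f a x = 1) (n : ℤ) {x : Q} (hx : x ∈ H) :
    (schreierRewrite g f (of a ^ n)).left x = 1 := by
  have hmem : schreierRewrite g f (of a) ∈ leftTrivialOn H := by
    simpa [schreierRewrite] using ⟨ha, hf⟩
  rw [_root_.map_zpow]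
  exact ((leftTrivialOn H).zpow_mem hmem n).2 x hx

theorem map_schreierRewrite_left (ψ : D →* FreeGroup α) (t : Q → FreeGroup α)
    (hgen : ∀ a x, ψ (f a x) = t x * of a * (t ((g (of a))⁻¹ * x))⁻¹)
    (w : FreeGroup α) (x : Q) :
    ψ ((schreierRewrite g f w).left x) = t x * w * (t ((g w)⁻¹ * x))⁻¹ := by
  induction w using FreeGroup.induction_on generalizing x with
  | C1 => simp
  | of a => simpa [schreierRewrite] using hgen a x
  | inv_of a ih =>
    rw [schreierRewrite_inv_left, _root_.map_inv, ih]
    simp [mul_assoc]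
  | mul w₁ w₂ ih₁ ih₂ =>
    rw [schreierRewrite_mul_left, _root_.map_mul, ih₁, ih₂]
    simp [mul_assoc]

def schreierRewriteKer : g.ker →* D where
  toFun w := (schreierRewrite g f w).left 1
  map_one' := by simp
  map_mul' w₁ w₂ := by simp [(MonoidHom.mem_ker).1 w₁.2]

end SchreierRewrite

theorem exists_freeGroupBasis_ker {α ι Q : Type*} [Group Q] (g : FreeGroup α →* Q)
    (γ : ι → FreeGroup α) (hγ : ∀ i, g (γ i) = 1) (t : Q → FreeGroup α) (ht : t 1 = 1)
    (f : α → Q → FreeGroup ι)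
    (hgen : ∀ a x, lift γ (f a x) = t x * of a * (t ((g (of a))⁻¹ * x))⁻¹)
    (hrewrite : ∀ i, (schreierRewrite g f (γ i)).left 1 = of i) :
    ∃ b : FreeGroupBasis ι g.ker, ∀ i, (b i : FreeGroup α) = γ i := by
  have hker : g.comp (lift γ) = 1 := ext_hom _ _ fun i => by simp [hγ]
  let φ : FreeGroup ι →* g.ker := (lift γ).codRestrict g.ker fun y => DFunLike.congr_fun hker y
  have hφρ : φ.comp (schreierRewriteKer g f) = MonoidHom.id _ := by
    ext w
    change lift γ ((schreierRewrite g f w).left 1) = w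
    simpa [(MonoidHom.mem_ker).1 w.2, ht] using map_schreierRewrite_left g f (lift γ) t hgen w 1
  have hρφ : (schreierRewriteKer g f).comp φ = MonoidHom.id _ :=
    ext_hom _ _ fun i => by
      simpa [φ, schreierRewriteKer, MonoidHom.codRestrict] using hrewrite i
  refine ⟨.ofRepr ((schreierRewriteKer g f).toMulEquiv φ hφρ hρφ), fun i => ?_⟩
  change lift γ (of i) = γ i
  exact lift_apply_of

end FreeGroup

namespace KB

lemma mk_mul_mk (a b c d : ℤ) : (⟨a, b⟩ : KB) * ⟨c, d⟩ = ⟨a + b.negOnePow * c, b + d⟩ := rfl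

lemma mk_inv (a b : ℤ) : (⟨a, b⟩ : KB)⁻¹ = ⟨-(b.negOnePow * a), -b⟩ := rfl

lemma mk_one_zero_zpow (n : ℤ) : (⟨1, 0⟩ : KB) ^ n = ⟨n, 0⟩ := by
  induction n using Int.induction_on with
  | zero => rfl
  | succ n ih => rw [zpow_add_one, ih, mk_mul_mk]; simp
  | pred n ih => rw [zpow_sub_one, ih, mk_inv, mk_mul_mk]; simp [sub_eq_add_neg]

lemma mk_zero_one_zpow (n : ℤ) : (⟨0, 1⟩ : KB) ^ n = ⟨0, n⟩ := by
  induction n using Int.induction_on with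
  | zero => rfl
  | succ n ih => rw [zpow_add_one, ih, mk_mul_mk]; simp
  | pred n ih => rw [zpow_sub_one, ih, mk_inv, mk_mul_mk]; simp [sub_eq_add_neg]

end KB

namespace KleinBU

open FreeGroup (of lift lift_apply_of schreierRewrite schreierRewrite_mul_left
  schreierRewrite_zpow_left_eq_one)

lemma g_u : g u = ⟨1, 0⟩ := lift_apply_of

lemma g_v : g v = ⟨0, 1⟩ := lift_apply_of

lemma g_zpow_u (n : ℤ) : g (u ^ n) = ⟨n, 0⟩ := by
  rw [map_zpow, g_u, KB.mk_one_zero_zpow]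

lemma g_zpow_v (n : ℤ) : g (v ^ n) = ⟨0, n⟩ := by
  rw [map_zpow, g_v, KB.mk_zero_one_zpow]

lemma g_zpow_u_mul_zpow_v (a b : ℤ) : g (u ^ a * v ^ b) = ⟨a, b⟩ := by
  simp [g_zpow_u, g_zpow_v, KB.mk_mul_mk]

def gamma (p : {p : ℤ × ℤ // p.2 ≠ 0}) : FreeGroup Bool :=
  v ^ p.1.1 * u ^ p.1.2 * v * u ^ p.1.2 * v ^ (-p.1.1 - 1)

lemma g_gamma (p : {p : ℤ × ℤ // p.2 ≠ 0}) : g (gamma p) = 1 := by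
  simp [gamma, g_zpow_u, g_zpow_v, g_v, KB.mk_mul_mk, KB.one_def, Int.negOnePow_succ]

/-- In `≀ᵣ` the coset reached after reading `w` from `x` is `(g w)⁻¹ * x`, so the representative of
`x` is a word mapping to `x⁻¹`. -/
def cosetRep (x : KB) : FreeGroup Bool := (u ^ x.a * v ^ x.b)⁻¹

def vLabel (x : KB) : FreeGroup {p : ℤ × ℤ // p.2 ≠ 0} :=
  if hx : x.a ≠ 0 then of ⟨(-x.b, -x.a), neg_ne_zero.2 hx⟩ else 1

def label (c : Bool) (x : KB) : FreeGroup {p : ℤ × ℤ // p.2 ≠ 0} :=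
  if c then 1 else vLabel x

lemma lift_gamma_label (c : Bool) (x : KB) :
    lift gamma (label c x) = cosetRep x * of c * (cosetRep ((g (of c))⁻¹ * x))⁻¹ := by
  obtain ⟨a, b⟩ := x
  cases c
  · rw [← v, g_v, KB.mk_inv, KB.mk_mul_mk]
    by_cases ha : a = 0
    · simp [label, vLabel, cosetRep, ha]
      group
    · simp [label, vLabel, cosetRep, ha, gamma]
      group
  · rw [← u, g_u, KB.mk_inv, KB.mk_mul_mk]
    simp [label, cosetRep]
    group

local notation "Φ" => schreierRewrite g label

lemma rewrite_zpow_u_left (n : ℤ) (x : KB) : (Φ (u ^ n)).left x = 1 :=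
  schreierRewrite_zpow_left_eq_one g label (H := ⊤) trivial (fun _ _ => rfl) n trivial

lemma rewrite_zpow_v_left (n : ℤ) {x : KB} (hx : x ∈ Subgroup.zpowers (g v)) :
    (Φ (v ^ n)).left x = 1 := by
  refine schreierRewrite_zpow_left_eq_one g label (Subgroup.mem_zpowers _) ?_ n hx
  rintro _ ⟨k, rfl⟩
  change label false (g v ^ k) = 1
  rw [← map_zpow, g_zpow_v]
  simp [label, vLabel]

lemma rewrite_gamma_left (p : {p : ℤ × ℤ // p.2 ≠ 0}) : (Φ (gamma p)).left 1 = of p := by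
  obtain ⟨⟨k, l⟩, hl⟩ := p
  have hcoset : (g (v ^ k * u ^ l))⁻¹ = ⟨-l, -k⟩ := by
    rw [← map_inv, mul_inv_rev, ← zpow_neg, ← zpow_neg, g_zpow_u_mul_zpow_v]
  have hlast : (g (v ^ k * u ^ l * v * u ^ l))⁻¹ ∈ Subgroup.zpowers (g v) := by
    refine ⟨-k - 1, (inv_eq_of_mul_eq_one_right ?_).symm⟩
    beta_reduce
    rw [← map_zpow, ← map_mul]
    exact g_gamma ⟨(k, l), hl⟩
  simp only [gamma, schreierRewrite_mul_left, mul_one, rewrite_zpow_u_left,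
    rewrite_zpow_v_left _ (Subgroup.one_mem _), rewrite_zpow_v_left _ hlast, hcoset, one_mul]
  simp [schreierRewrite, v, label, vLabel, hl]

end KleinBU

open KleinBU in
/-- The kernel of `g : F(u,v) → ℤ ⋊ ℤ` is a free group with basis
`{Γ_{k,l} = v^k u^l v u^l v^{-k-1} : k, l ∈ ℤ, l ≠ 0}`. -/
theorem ker_g_free_basis_Gamma :
    ∃ b : FreeGroupBasis {p : ℤ × ℤ // p.2 ≠ 0} (MonoidHom.ker g),
      ∀ p : {p : ℤ × ℤ // p.2 ≠ 0},
        (b p : FreeGroup Bool)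
          = v ^ p.1.1 * u ^ p.1.2 * v * u ^ p.1.2 * v ^ (-p.1.1 - 1) :=
  FreeGroup.exists_freeGroupBasis_ker g gamma g_gamma cosetRep (by simp [cosetRep, KB.one_def])
    label lift_gamma_label rewrite_gamma_left
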